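/- arXiv:2009.02226 — 4 statements merged into one kernel-verified Lean document; each statement's English description precedes it below -/
import Mathlib

section
/- Let Z > 0, a ≥ 0, and define for π ∈ (0,1): Φ(π) = Z·π/(1-π) + a and Π(π) = Φ(π)/(1+Φ(π)). If g : [0,1] → ℝ is a C² function, then the function G(π) = (1-π)(1+Φ(π)) g(Π(π)) satisfies G''(π) = ((1-Π(π))/(1-π))³ Z² g''(Π(π)). In particular, if g is concave then G is concave on (0,1). -/
/-!
In the variable `π`, both `N = (1 - π) Φ = a + (Z - a) π` and `D = (1 - π)(1 + Φ) = (1 + a) + (Z - 1 - a) π`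
are affine, `Π = N / D` and `G = D · g (N / D)`: `G` is the perspective of `g` restricted to a line.
Differentiating twice, the first-order terms in `g'` cancel and the perspective has second derivative
`w² / D³ · g''(N / D)`, where `w = N' D - N D'` is the (constant) Wronskian of `N` and `D`.
Here `w = Z` and `1 - Π = (1 - π) / D`, which gives the formula; concavity follows since `D > 0`.
-/

open Set Filter Topology

section Perspective

variable {g N D : ℝ → ℝ} {n d w x : ℝ}

theorem hasDerivAt_perspective (hN : HasDerivAt N n x) (hD : HasDerivAt D d x) (hDx : D x ≠ 0)
    (hg : DifferentiableAt ℝ g (N x / D x)) :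
    HasDerivAt (fun y => D y * g (N y / D y))
      (d * g (N x / D x) + (n * D x - N x * d) / D x * deriv g (N x / D x)) x := by
  have hgP : HasDerivAt (fun y => g (N y / D y)) _ x := hg.hasDerivAt.comp x (hN.fun_div hD hDx)
  refine (hD.fun_mul hgP).congr_deriv ?_
  field_simp

theorem hasDerivAt_deriv_perspective (hN : ∀ y, HasDerivAt N n y) (hD : ∀ y, HasDerivAt D d y)
    (hw : ∀ y, n * D y - N y * d = w) (hg : Differentiable ℝ g)
    (hg' : Differentiable ℝ (deriv g)) (hDx : D x ≠ 0) :
    HasDerivAt (deriv fun y => D y * g (N y / D y))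
      (w ^ 2 / D x ^ 3 * deriv (deriv g) (N x / D x)) x := by
  have hP : HasDerivAt (fun y => N y / D y) (w / D x ^ 2) x := hw x ▸ (hN x).fun_div (hD x) hDx
  have hgP := (hg _).hasDerivAt.comp x hP
  have hg'P := (hg' _).hasDerivAt.comp x hP
  have hderiv : HasDerivAt (fun y => d * g (N y / D y) + w / D y * deriv g (N y / D y))
      (w ^ 2 / D x ^ 3 * deriv (deriv g) (N x / D x)) x := by
    refine ((hgP.const_mul d).fun_add
      (((hasDerivAt_const x w).fun_div (hD x) hDx).fun_mul hg'P)).congr_deriv ?_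
    rw [Function.comp_apply]
    field_simp
    ring
  have hU : IsOpen {y | D y ≠ 0} :=
    isOpen_ne_fun (continuous_iff_continuousAt.2 fun y => (hD y).continuousAt) continuous_const
  refine hderiv.congr_of_eventuallyEq ?_
  filter_upwards [hU.mem_nhds hDx] with y hy
  rw [(hasDerivAt_perspective (hN y) (hD y) hy (hg _)).deriv, hw y]

theorem concaveOn_perspective {U : Set ℝ} (hU : Convex ℝ U) (hN : ∀ y, HasDerivAt N n y)
    (hD : ∀ y, HasDerivAt D d y) (hw : ∀ y, n * D y - N y * d = w) (hg : Differentiable ℝ g)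
    (hg' : Differentiable ℝ (deriv g)) (hDU : ∀ x ∈ U, 0 < D x)
    (hg'' : ∀ x ∈ U, deriv (deriv g) (N x / D x) ≤ 0) :
    ConcaveOn ℝ U fun y => D y * g (N y / D y) := by
  have hF'' (x : ℝ) (hx : x ∈ U) := hasDerivAt_deriv_perspective hN hD hw hg hg' (hDU x hx).ne'
  refine concaveOn_of_deriv2_nonpos' hU
    (fun x hx => (hasDerivAt_perspective (hN x) (hD x) (hDU x hx).ne'
      (hg _)).differentiableAt.differentiableWithinAt)
    (fun x hx => (hF'' x hx).differentiableAt.differentiableWithinAt) fun x hx => ?_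
  rw [Function.iterate_succ_apply, Function.iterate_one, (hF'' x hx).deriv]
  exact mul_nonpos_of_nonneg_of_nonpos (div_nonneg (sq_nonneg w) (pow_pos (hDU x hx) 3).le)
    (hg'' x hx)

end Perspective

theorem ConcaveOn.deriv_deriv_nonpos {s : Set ℝ} {g : ℝ → ℝ} (hg : ConcaveOn ℝ s g)
    (hd : ∀ x ∈ s, DifferentiableAt ℝ g x) {x : ℝ} (hx : x ∈ interior s) :
    deriv (deriv g) x ≤ 0 := by
  rw [← derivWithin_of_isOpen isOpen_interior hx]
  exact ((hg.antitoneOn_deriv hd).mono interior_subset).derivWithin_nonpos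

section Odds

variable {Z a x : ℝ}

theorem one_sub_mul_one_add_odds (hx : x ≠ 1) :
    (1 - x) * (1 + (Z * x / (1 - x) + a)) = 1 + a + (Z - 1 - a) * x := by
  have : 1 - x ≠ 0 := sub_ne_zero.2 hx.symm
  field_simp
  ring

theorem odds_div_one_add_odds (hx : x ≠ 1) :
    (Z * x / (1 - x) + a) / (1 + (Z * x / (1 - x) + a)) =
      (a + (Z - a) * x) / (1 + a + (Z - 1 - a) * x) := by
  have : 1 - x ≠ 0 := sub_ne_zero.2 hx.symm
  rw [← one_sub_mul_one_add_odds hx, ← mul_div_mul_left _ _ this]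
  congr 1
  field_simp
  ring

end Odds

/-- with Z > 0, a ≥ 0, Φ(x) = Z·x/(1-x) + a, Π(x) = Φ(x)/(1+Φ(x)) and
g C², the function G(x) = (1-x)(1+Φ(x))g(Π(x)) satisfies
G''(x) = ((1-Π(x))/(1-x))³ Z² g''(Π(x)) on (0,1); in particular if g is concave then
G is concave on (0,1). -/
theorem stmt12 (Z a : ℝ) (hZ : 0 < Z) (ha : 0 ≤ a)
    (Φ Pi G g : ℝ → ℝ) (hgC2 : ContDiff ℝ 2 g)
    (hΦ : ∀ x : ℝ, Φ x = Z * x / (1 - x) + a)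
    (hPi : ∀ x : ℝ, Pi x = Φ x / (1 + Φ x))
    (hG : ∀ x : ℝ, G x = (1 - x) * (1 + Φ x) * g (Pi x)) :
    (∀ x ∈ Set.Ioo (0:ℝ) 1,
      deriv (deriv G) x = ((1 - Pi x) / (1 - x)) ^ 3 * Z ^ 2 * deriv (deriv g) (Pi x)) ∧
    (ConcaveOn ℝ (Set.Icc (0:ℝ) 1) g → ConcaveOn ℝ (Set.Ioo (0:ℝ) 1) G) := by
  set N : ℝ → ℝ := fun x => a + (Z - a) * x
  set D : ℝ → ℝ := fun x => 1 + a + (Z - 1 - a) * x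
  have hN (x : ℝ) : HasDerivAt N (Z - a) x :=
    (((hasDerivAt_id' x).const_mul (Z - a)).const_add a).congr_deriv (mul_one _)
  have hD (x : ℝ) : HasDerivAt D (Z - 1 - a) x :=
    (((hasDerivAt_id' x).const_mul (Z - 1 - a)).const_add (1 + a)).congr_deriv (mul_one _)
  have hw (x : ℝ) : (Z - a) * D x - N x * (Z - 1 - a) = Z := by ring
  have hDN (x : ℝ) : D x - N x = 1 - x := by ring
  have hNpos {x : ℝ} (hx : x ∈ Ioo (0:ℝ) 1) : 0 < N x := by nlinarith [hx.1, hx.2]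
  have hDpos {x : ℝ} (hx : x ∈ Ioo (0:ℝ) 1) : 0 < D x := by linarith [hNpos hx, hDN x, hx.2]
  have hPi_eq {x : ℝ} (hx : x ∈ Ioo (0:ℝ) 1) : Pi x = N x / D x := by
    rw [hPi, hΦ, odds_div_one_add_odds hx.2.ne]
  have hG_eq : EqOn G (fun y => D y * g (N y / D y)) (Ioo 0 1) := fun x hx => by
    rw [hG, hΦ, hPi_eq hx, one_sub_mul_one_add_odds hx.2.ne]
  have hg : Differentiable ℝ g := hgC2.differentiable two_ne_zero
  have hg' : Differentiable ℝ (deriv g) := hgC2.differentiable_deriv_two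
  refine ⟨fun x hx => ?_, fun hconc => ?_⟩
  · have : 1 - x ≠ 0 := sub_ne_zero.2 hx.2.ne'
    rw [((hG_eq.eventuallyEq_of_mem (isOpen_Ioo.mem_nhds hx)).deriv).deriv_eq,
      (hasDerivAt_deriv_perspective hN hD hw hg hg' (hDpos hx).ne').deriv, hPi_eq hx,
      one_sub_div (hDpos hx).ne', hDN x]
    field_simp
  · refine (concaveOn_perspective (convex_Ioo 0 1) hN hD hw hg hg' (fun x hx => hDpos hx)
      fun x hx => hconc.deriv_deriv_nonpos (fun y _ => hg y) ?_).congr hG_eq.symm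
    rw [interior_Icc]
    exact ⟨div_pos (hNpos hx) (hDpos hx), (div_lt_one (hDpos hx)).2 (by linarith [hDN x, hx.2])⟩
end

section
/- Let Z > 0, a ≥ 0, Φ(π) = Z·π/(1-π) + a, Π(π) = Φ(π)/(1+Φ(π)). If g : [0,1] → ℝ is concave (not necessarily smooth), then π ↦ (1-π)(1+Φ(π)) g(Π(π)) is concave on (0,1). -/
/-!
Clearing the denominator `1 - x` gives `(1 - x) (1 + Φ x) = L x` and `Π x = M x / L x` with
`L x = (1 - x)(1 + a) + x Z` and `M x = (1 - x) a + x Z`, both affine in `x`. Hence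
`G x = L x · g (M x / L x)` is the perspective `(u, w) ↦ u g (w / u)` of `g` composed with an affine
map, and the perspective of a concave function is concave, with no smoothness needed.
-/

open Set

theorem ConcaveOn.perspective {E : Type*} [AddCommGroup E] [Module ℝ E] {s : Set E} {g : E → ℝ}
    (hg : ConcaveOn ℝ s g) :
    ConcaveOn ℝ {p : ℝ × E | 0 < p.1 ∧ p.1⁻¹ • p.2 ∈ s} fun p => p.1 * g (p.1⁻¹ • p.2) := by
  have key : ∀ ⦃p : ℝ × E⦄, 0 < p.1 ∧ p.1⁻¹ • p.2 ∈ s → ∀ ⦃q : ℝ × E⦄, 0 < q.1 ∧ q.1⁻¹ • q.2 ∈ s →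
      ∀ ⦃a b : ℝ⦄, 0 ≤ a → 0 ≤ b → a + b = 1 →
      0 < (a • p + b • q).1 ∧ (a • p + b • q).1⁻¹ • (a • p + b • q).2 ∈ s ∧
        a • (p.1 * g (p.1⁻¹ • p.2)) + b • (q.1 * g (q.1⁻¹ • q.2)) ≤
          (a • p + b • q).1 * g ((a • p + b • q).1⁻¹ • (a • p + b • q).2) := by
    rintro ⟨u, w⟩ ⟨hu, hw⟩ ⟨u', w'⟩ ⟨hu', hw'⟩ a b ha hb hab
    simp only [Prod.fst_add, Prod.snd_add, Prod.smul_fst, Prod.smul_snd, smul_eq_mul]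
    have hz : 0 < a * u + b * u' := by
      obtain rfl | ha' := ha.eq_or_lt
      · rw [zero_add] at hab; subst hab; simpa using hu'
      · positivity
    set z := a * u + b * u'
    -- with these weights the two arguments of `g` combine convexly to `z⁻¹ • (a • w + b • w')`
    have hα : 0 ≤ a * u / z := by positivity
    have hβ : 0 ≤ b * u' / z := by positivity
    have hαβ : a * u / z + b * u' / z = 1 := by rw [← add_div, div_self hz.ne']
    have hcomb : (a * u / z) • (u⁻¹ • w) + (b * u' / z) • (u'⁻¹ • w') = z⁻¹ • (a • w + b • w') := by
      simp only [smul_smul, smul_add]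
      congr 2 <;> field_simp
    refine ⟨hz, hcomb ▸ hg.1 hw hw' hα hβ hαβ, ?_⟩
    have := hg.2 hw hw' hα hβ hαβ
    rw [hcomb, smul_eq_mul, smul_eq_mul] at this
    calc a * (u * g (u⁻¹ • w)) + b * (u' * g (u'⁻¹ • w'))
        = z * (a * u / z * g (u⁻¹ • w) + b * u' / z * g (u'⁻¹ • w')) := by field_simp
      _ ≤ z * g (z⁻¹ • (a • w + b • w')) := by gcongr
  exact ⟨fun p hp q hq a b ha hb hab => ⟨(key hp hq ha hb hab).1, (key hp hq ha hb hab).2.1⟩,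
    fun p hp q hq a b ha hb hab => (key hp hq ha hb hab).2.2⟩

/-- with Z > 0, a ≥ 0, Φ(x) = Z·x/(1-x) + a, Π(x) = Φ(x)/(1+Φ(x)), and
g : [0,1] → ℝ concave (not necessarily smooth), the function
x ↦ (1-x)(1+Φ(x))g(Π(x)) is concave on (0,1). -/
theorem stmt13 (Z a : ℝ) (hZ : 0 < Z) (ha : 0 ≤ a)
    (Φ Pi G g : ℝ → ℝ)
    (hg : ConcaveOn ℝ (Set.Icc (0:ℝ) 1) g)
    (hΦ : ∀ x : ℝ, Φ x = Z * x / (1 - x) + a)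
    (hPi : ∀ x : ℝ, Pi x = Φ x / (1 + Φ x))
    (hG : ∀ x : ℝ, G x = (1 - x) * (1 + Φ x) * g (Pi x)) :
    ConcaveOn ℝ (Set.Ioo (0:ℝ) 1) G := by
  set A : ℝ →ᵃ[ℝ] ℝ × ℝ := AffineMap.lineMap (1 + a, a) (Z, Z)
  have hA : ∀ x, A x = ((1 - x) * (1 + a) + x * Z, (1 - x) * a + x * Z) := by
    intro x; simp [A, AffineMap.lineMap_apply_module]
  have hmem : ∀ x ∈ Ioo (0:ℝ) 1, 0 < (A x).1 ∧ (A x).1⁻¹ • (A x).2 ∈ Icc (0:ℝ) 1 := by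
    rintro x ⟨hx0, hx1⟩
    have hL : 0 < (1 - x) * (1 + a) + x * Z := by nlinarith
    rw [hA, smul_eq_mul]
    exact ⟨hL, by positivity, inv_mul_le_one_of_le₀ (by nlinarith) hL.le⟩
  refine ((hg.perspective.comp_affineMap A).subset hmem (convex_Ioo 0 1)).congr fun x hx => ?_
  have hx : 1 - x ≠ 0 := sub_ne_zero.2 hx.2.ne'
  have h1Φ : (1 - x) * (1 + Φ x) = (1 - x) * (1 + a) + x * Z := by
    rw [hΦ]; field_simp; ring
  have hPix : Pi x = ((1 - x) * (1 + a) + x * Z)⁻¹ * ((1 - x) * a + x * Z) := by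
    rw [hPi, hΦ]; field_simp; ring
  simp only [Function.comp_apply, hA, hG, h1Φ, hPix, smul_eq_mul]
end

section
/- For the sequential testing problem (ST1) with n = 2: V(π) = inf_τ E_π[min(Π¹_τ,1-Π¹_τ) + min(Π²_τ,1-Π²_τ) + cτ], the restriction of the stopping region D = {V = g} to the square R₁ = [0,1/2]² has the form D ∩ R₁ = {π ∈ R₁ : π₁ ≤ A₁*, π₂ ≤ b(π₁)} for some non-increasing upper semicontinuous function b : [0,A₁*] → [0,A₂*], where (A_i*, 1-A_i*) is the continuation region of the one-dimensional testing problem ST(μ_i, c). -/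
/-!
On `[0,1/2]²` the cost is `g π = π₁ + π₂`, so a value function that lies below `g` and is
1-Lipschitz in each variable can only drop further below `g` when a coordinate increases:
the stopping set is a closed lower set of the square. Its boundary `b π₁ = sup {π₂ | π ∈ D}`
is therefore non-increasing and, by closedness, upper semicontinuous. On the axes, `V` is the
one-dimensional value function, which pins the extent of `D` to `[0,A₁*] × [0,A₂*]`.
-/

open Set Topology

noncomputable def sectionSup (D : Set (ℝ × ℝ)) (x : ℝ) : ℝ := sSup {y | (x, y) ∈ D}

section LowerSet

variable {D : Set (ℝ × ℝ)}

lemma mk_sectionSup_mem (hD : IsClosed D) (hbdd : ∀ x, BddAbove {y | (x, y) ∈ D})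
    {x : ℝ} (hx : (x, 0) ∈ D) : (x, sectionSup D x) ∈ D :=
  (hD.preimage (Continuous.prodMk_right x)).csSup_mem ⟨0, hx⟩ (hbdd x)

variable (hD : IsClosed D) (hnonneg : D ⊆ Ici 0) (hlow : ∀ p ∈ D, Icc 0 p ⊆ D)
  (hbdd : ∀ x, BddAbove {y | (x, y) ∈ D})
include hD hnonneg hlow hbdd

lemma mk_mem_iff_le_sectionSup {x y : ℝ} (hx : (x, 0) ∈ D) (hy : 0 ≤ y) :
    (x, y) ∈ D ↔ y ≤ sectionSup D x := by
  refine ⟨fun h => le_csSup (hbdd x) h, fun h => hlow _ (mk_sectionSup_mem hD hbdd hx) ?_⟩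
  exact ⟨⟨(hnonneg hx).1, hy⟩, le_rfl, h⟩

lemma antitoneOn_sectionSup {s : Set ℝ} (hs : ∀ x ∈ s, (x, 0) ∈ D) :
    AntitoneOn (sectionSup D) s := by
  intro x hx x' hx' hxx'
  have hx'D := mk_sectionSup_mem hD hbdd (hs x' hx')
  refine le_csSup (hbdd x) (hlow _ hx'D ⟨?_, hxx', le_rfl⟩)
  exact ⟨(hnonneg (hs x hx)).1, (hnonneg hx'D).2⟩

/-- A point `(x, y)` above the section lies in the open complement of `D`, hence so does
`(x', y)` for `x'` near `x`. -/
lemma upperSemicontinuousOn_sectionSup {s : Set ℝ} (hs : ∀ x ∈ s, (x, 0) ∈ D) :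
    UpperSemicontinuousOn (sectionSup D) s := by
  intro x hx z hz
  obtain ⟨y, hby, hyz⟩ := exists_between hz
  have hy : 0 ≤ y := (hnonneg (mk_sectionSup_mem hD hbdd (hs x hx))).2.trans hby.le
  have hxy : (x, y) ∉ D := fun h => hby.not_ge (le_csSup (hbdd x) h)
  have hnear : ∀ᶠ x' in 𝓝 x, (x', y) ∉ D :=
    (Continuous.prodMk_left y).continuousAt.preimage_mem_nhds (hD.isOpen_compl.mem_nhds hxy)
  filter_upwards [nhdsWithin_le_nhds hnear, self_mem_nhdsWithin] with x' hx'y hx's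
  rw [mk_mem_iff_le_sectionSup hD hnonneg hlow hbdd (hs x' hx's) hy, not_le] at hx'y
  exact hx'y.trans hyz

end LowerSet

lemma sub_le_of_lipschitz_in_each_variable {V : ℝ × ℝ → ℝ}
    (hLip1 : ∀ y ∈ Icc (0:ℝ) 1, ∀ x ∈ Icc (0:ℝ) 1, ∀ x' ∈ Icc (0:ℝ) 1,
      |V (x, y) - V (x', y)| ≤ |x - x'|)
    (hLip2 : ∀ x ∈ Icc (0:ℝ) 1, ∀ y ∈ Icc (0:ℝ) 1, ∀ y' ∈ Icc (0:ℝ) 1,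
      |V (x, y) - V (x, y')| ≤ |y - y'|)
    {p q : ℝ × ℝ} (hq : q ∈ Icc 0 p) (hp : p ≤ (1, 1)) :
    V p - V q ≤ (p.1 - q.1) + (p.2 - q.2) := by
  obtain ⟨⟨hq₁, hq₂⟩, hqp₁, hqp₂⟩ := hq
  obtain ⟨hp₁, hp₂⟩ := hp
  have h₁ := hLip1 p.2 ⟨hq₂.trans hqp₂, hp₂⟩ p.1 ⟨hq₁.trans hqp₁, hp₁⟩ q.1 ⟨hq₁, hqp₁.trans hp₁⟩
  have h₂ := hLip2 q.1 ⟨hq₁, hqp₁.trans hp₁⟩ p.2 ⟨hq₂.trans hqp₂, hp₂⟩ q.2 ⟨hq₂, hqp₂.trans hp₂⟩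
  rw [abs_of_nonneg (sub_nonneg.2 hqp₁)] at h₁
  rw [abs_of_nonneg (sub_nonneg.2 hqp₂)] at h₂
  linarith [le_abs_self (V (p.1, p.2) - V (q.1, p.2)), le_abs_self (V (q.1, p.2) - V (q.1, q.2))]

lemma not_lt_self_iff_le_threshold {u : ℝ → ℝ} {A : ℝ} (hA : A < 1/2)
    (hC : ∀ x ∈ Icc (0:ℝ) 1, (u x < min x (1 - x) ↔ x ∈ Ioo A (1 - A)))
    {x : ℝ} (hx : x ∈ Icc (0:ℝ) (1/2)) : ¬ u x < x ↔ x ≤ A := by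
  have hx1 : x ∈ Icc (0:ℝ) 1 := ⟨hx.1, by linarith [hx.2]⟩
  have hCx := hC x hx1
  rw [min_eq_left (by linarith [hx.2])] at hCx
  rw [hCx, mem_Ioo, not_and_or, not_lt, not_lt]
  exact or_iff_left (by linarith [hx.2])

def stoppingSetR₁ (V g : ℝ × ℝ → ℝ) : Set (ℝ × ℝ) :=
  {p | p ∈ Icc ((0:ℝ), (0:ℝ)) (1/2, 1/2) ∧ V p = g p}

section StoppingSet

variable {V g : ℝ × ℝ → ℝ}
  (hgdef : ∀ p : ℝ × ℝ, g p = min p.1 (1 - p.1) + min p.2 (1 - p.2))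
include hgdef

lemma g_eq_add_of_mem_R₁ {p : ℝ × ℝ} (hp : p ∈ Icc ((0:ℝ), (0:ℝ)) (1/2, 1/2)) :
    g p = p.1 + p.2 := by
  rw [hgdef, min_eq_left (by linarith [hp.2.1]), min_eq_left (by linarith [hp.2.2])]

lemma isClosed_stoppingSetR₁ (hVcont : ContinuousOn V (Icc ((0:ℝ), (0:ℝ)) (1, 1))) :
    IsClosed (stoppingSetR₁ V g) := by
  have hg : Continuous g := by
    rw [show g = _ from funext hgdef]
    fun_prop
  have hV : ContinuousOn V (Icc ((0:ℝ), (0:ℝ)) (1/2, 1/2)) :=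
    hVcont.mono (Icc_subset_Icc le_rfl (by norm_num))
  have hD : stoppingSetR₁ V g = Icc ((0:ℝ), (0:ℝ)) (1/2, 1/2) ∩ (V - g) ⁻¹' {0} := by
    ext p
    simp only [stoppingSetR₁, mem_ofPred_eq, mem_inter_iff, mem_preimage, Pi.sub_apply,
      mem_singleton_iff, sub_eq_zero]
  rw [hD]
  exact (hV.sub hg.continuousOn).preimage_isClosed_of_isClosed isClosed_Icc isClosed_singleton

/-- Lipschitz continuity makes `V - g` non-increasing in each coordinate on `R₁`, while `V ≤ g`. -/
lemma Icc_subset_stoppingSetR₁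
    (hVle : ∀ p ∈ Icc ((0:ℝ), (0:ℝ)) (1, 1), V p ≤ g p)
    (hLip1 : ∀ y ∈ Icc (0:ℝ) 1, ∀ x ∈ Icc (0:ℝ) 1, ∀ x' ∈ Icc (0:ℝ) 1,
      |V (x, y) - V (x', y)| ≤ |x - x'|)
    (hLip2 : ∀ x ∈ Icc (0:ℝ) 1, ∀ y ∈ Icc (0:ℝ) 1, ∀ y' ∈ Icc (0:ℝ) 1,
      |V (x, y) - V (x, y')| ≤ |y - y'|)
    {p : ℝ × ℝ} (hp : p ∈ stoppingSetR₁ V g) : Icc 0 p ⊆ stoppingSetR₁ V g := by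
  intro q hq
  obtain ⟨hpR, hVp⟩ := hp
  have hqR : q ∈ Icc ((0:ℝ), (0:ℝ)) (1/2, 1/2) := ⟨hq.1, hq.2.trans hpR.2⟩
  have hp1 : p ≤ (1, 1) := hpR.2.trans (by norm_num [Prod.le_def])
  have hVq := hVle q ⟨hqR.1, hq.2.trans hp1⟩
  have hlip := sub_le_of_lipschitz_in_each_variable hLip1 hLip2 hq hp1
  refine ⟨hqR, ?_⟩
  rw [g_eq_add_of_mem_R₁ hgdef hpR] at hVp
  rw [g_eq_add_of_mem_R₁ hgdef hqR] at hVq ⊢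
  linarith

lemma mem_stoppingSetR₁_iff (hVle : ∀ p ∈ Icc ((0:ℝ), (0:ℝ)) (1, 1), V p ≤ g p)
    {p : ℝ × ℝ} (hp : p ∈ Icc ((0:ℝ), (0:ℝ)) (1/2, 1/2)) :
    p ∈ stoppingSetR₁ V g ↔ ¬ V p < p.1 + p.2 := by
  have hVp := hVle p ⟨hp.1, hp.2.trans (by norm_num [Prod.le_def])⟩
  rw [g_eq_add_of_mem_R₁ hgdef hp] at hVp
  rw [stoppingSetR₁, mem_ofPred_eq, g_eq_add_of_mem_R₁ hgdef hp, not_lt]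
  exact ⟨fun h => h.2.ge, fun h => ⟨hp, le_antisymm hVp h⟩⟩

variable (hVle : ∀ p ∈ Icc ((0:ℝ), (0:ℝ)) (1, 1), V p ≤ g p) {A : ℝ} (hA : A < 1/2) {u : ℝ → ℝ}
  (hC : ∀ x ∈ Icc (0:ℝ) 1, (u x < min x (1 - x) ↔ x ∈ Ioo A (1 - A)))
include hVle hA hC

lemma mk_zero_mem_stoppingSetR₁_iff (hu : ∀ x ∈ Icc (0:ℝ) 1, V (x, 0) = u x)
    {x : ℝ} (hx : x ∈ Icc (0:ℝ) (1/2)) : (x, 0) ∈ stoppingSetR₁ V g ↔ x ≤ A := by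
  rw [mem_stoppingSetR₁_iff hgdef hVle (p := (x, 0)) ⟨⟨hx.1, le_rfl⟩, hx.2, by norm_num⟩, add_zero,
    hu x ⟨hx.1, hx.2.trans (by norm_num)⟩]
  exact not_lt_self_iff_le_threshold hA hC hx

lemma zero_mk_mem_stoppingSetR₁_iff (hu : ∀ y ∈ Icc (0:ℝ) 1, V (0, y) = u y)
    {y : ℝ} (hy : y ∈ Icc (0:ℝ) (1/2)) : (0, y) ∈ stoppingSetR₁ V g ↔ y ≤ A := by
  rw [mem_stoppingSetR₁_iff hgdef hVle (p := (0, y)) ⟨⟨le_rfl, hy.1⟩, by norm_num, hy.2⟩, zero_add,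
    hu y ⟨hy.1, hy.2.trans (by norm_num)⟩]
  exact not_lt_self_iff_le_threshold hA hC hy

end StoppingSet

theorem stmt14_general (A₁ A₂ : ℝ)
    (hA₁ : A₁ ∈ Set.Ioo (0:ℝ) (1/2)) (hA₂ : A₂ ∈ Set.Ioo (0:ℝ) (1/2))
    (V g : ℝ × ℝ → ℝ)
    (hgdef : ∀ p : ℝ × ℝ, g p = min p.1 (1 - p.1) + min p.2 (1 - p.2))
    (u₁ u₂ : ℝ → ℝ)
    (hu₁ : ∀ x ∈ Set.Icc (0:ℝ) 1, V (x, 0) = u₁ x)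
    (hu₂ : ∀ y ∈ Set.Icc (0:ℝ) 1, V (0, y) = u₂ y)
    (hC₁ : ∀ x ∈ Set.Icc (0:ℝ) 1, (u₁ x < min x (1 - x) ↔ x ∈ Set.Ioo A₁ (1 - A₁)))
    (hC₂ : ∀ y ∈ Set.Icc (0:ℝ) 1, (u₂ y < min y (1 - y) ↔ y ∈ Set.Ioo A₂ (1 - A₂)))
    (hVle : ∀ p ∈ Set.Icc ((0:ℝ), (0:ℝ)) (1, 1), V p ≤ g p)
    (hVcont : ContinuousOn V (Set.Icc ((0:ℝ), (0:ℝ)) (1, 1)))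
    (hLip1 : ∀ y ∈ Set.Icc (0:ℝ) 1, ∀ x ∈ Set.Icc (0:ℝ) 1, ∀ x' ∈ Set.Icc (0:ℝ) 1,
      |V (x, y) - V (x', y)| ≤ |x - x'|)
    (hLip2 : ∀ x ∈ Set.Icc (0:ℝ) 1, ∀ y ∈ Set.Icc (0:ℝ) 1, ∀ y' ∈ Set.Icc (0:ℝ) 1,
      |V (x, y) - V (x, y')| ≤ |y - y'|) :
    ∃ b : ℝ → ℝ,
      (∀ x ∈ Set.Icc (0:ℝ) A₁, b x ∈ Set.Icc (0:ℝ) A₂) ∧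
      AntitoneOn b (Set.Icc (0:ℝ) A₁) ∧
      UpperSemicontinuousOn b (Set.Icc (0:ℝ) A₁) ∧
      (∀ p : ℝ × ℝ, p ∈ Set.Icc ((0:ℝ), (0:ℝ)) (1/2, 1/2) →
        (V p = g p ↔ p.1 ≤ A₁ ∧ p.2 ≤ b p.1)) := by
  set D := stoppingSetR₁ V g
  have hclosed : IsClosed D := isClosed_stoppingSetR₁ hgdef hVcont
  have hnonneg : D ⊆ Ici 0 := fun p hp => hp.1.1
  have hlow : ∀ p ∈ D, Icc 0 p ⊆ D := fun p hp =>
    Icc_subset_stoppingSetR₁ hgdef hVle hLip1 hLip2 hp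
  have hbdd : ∀ x, BddAbove {y | (x, y) ∈ D} := fun x => ⟨1/2, fun y hy => hy.1.2.2⟩
  have haxis : ∀ x ∈ Icc (0:ℝ) A₁, (x, 0) ∈ D := fun x hx =>
    (mk_zero_mem_stoppingSetR₁_iff hgdef hVle hA₁.2 hC₁ hu₁ ⟨hx.1, hx.2.trans hA₁.2.le⟩).2 hx.2
  have hfst : ∀ p ∈ D, p.1 ≤ A₁ := fun p hp =>
    (mk_zero_mem_stoppingSetR₁_iff hgdef hVle hA₁.2 hC₁ hu₁ ⟨hp.1.1.1, hp.1.2.1⟩).1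
      (hlow p hp ⟨⟨hp.1.1.1, le_rfl⟩, le_rfl, hp.1.1.2⟩)
  have hsnd : ∀ p ∈ D, p.2 ≤ A₂ := fun p hp =>
    (zero_mk_mem_stoppingSetR₁_iff hgdef hVle hA₂.2 hC₂ hu₂ ⟨hp.1.1.2, hp.1.2.2⟩).1
      (hlow p hp ⟨⟨le_rfl, hp.1.1.2⟩, hp.1.1.1, le_rfl⟩)
  refine ⟨sectionSup D, fun x hx => ?_, antitoneOn_sectionSup hclosed hnonneg hlow hbdd haxis,
    upperSemicontinuousOn_sectionSup hclosed hnonneg hlow hbdd haxis, fun p hp => ?_⟩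
  · have hb := mk_sectionSup_mem hclosed hbdd (haxis x hx)
    exact ⟨(hnonneg hb).2, hsnd _ hb⟩
  · have hpD : V p = g p ↔ p ∈ D := ⟨fun h => ⟨hp, h⟩, fun h => h.2⟩
    rw [hpD]
    refine ⟨fun h => ⟨hfst p h, ?_⟩, fun ⟨h₁, h₂⟩ => ?_⟩
    · exact (mk_mem_iff_le_sectionSup hclosed hnonneg hlow hbdd
        (hlow p h ⟨⟨hp.1.1, le_rfl⟩, le_rfl, hp.1.2⟩) hp.1.2).1 h
    · exact (mk_mem_iff_le_sectionSup hclosed hnonneg hlow hbdd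
        (haxis p.1 ⟨hp.1.1, h₁⟩) hp.1.2).2 h₂

/-- structure of the stopping region of (ST1) in the square
R₁ = [0,1/2]². V is the value function, g(π) = min(π₁,1-π₁)+min(π₂,1-π₂),
V(·,0) and V(0,·) coincide with the one-dimensional value functions u₁, u₂, whose
continuation regions are (Aᵢ*, 1-Aᵢ*). V is assumed (as established in the paper)
continuous, ≤ g, Lipschitz(1) in each variable, and concave in each variable.
Conclusion: D ∩ R₁ = {π ∈ R₁ : π₁ ≤ A₁*, π₂ ≤ b(π₁)} for a non-increasing upper
semicontinuous b : [0,A₁*] → [0,A₂*]. -/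
theorem stmt14 (A₁ A₂ : ℝ)
    (hA₁ : A₁ ∈ Set.Ioo (0:ℝ) (1/2)) (hA₂ : A₂ ∈ Set.Ioo (0:ℝ) (1/2))
    (V g : ℝ × ℝ → ℝ)
    (hgdef : ∀ p : ℝ × ℝ, g p = min p.1 (1 - p.1) + min p.2 (1 - p.2))
    (u₁ u₂ : ℝ → ℝ)
    (hu₁ : ∀ x ∈ Set.Icc (0:ℝ) 1, V (x, 0) = u₁ x)
    (hu₂ : ∀ y ∈ Set.Icc (0:ℝ) 1, V (0, y) = u₂ y)
    (hC₁ : ∀ x ∈ Set.Icc (0:ℝ) 1, (u₁ x < min x (1 - x) ↔ x ∈ Set.Ioo A₁ (1 - A₁)))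
    (hC₂ : ∀ y ∈ Set.Icc (0:ℝ) 1, (u₂ y < min y (1 - y) ↔ y ∈ Set.Ioo A₂ (1 - A₂)))
    (hVle : ∀ p ∈ Set.Icc ((0:ℝ), (0:ℝ)) (1, 1), V p ≤ g p)
    (hVcont : ContinuousOn V (Set.Icc ((0:ℝ), (0:ℝ)) (1, 1)))
    (hLip1 : ∀ y ∈ Set.Icc (0:ℝ) 1, ∀ x ∈ Set.Icc (0:ℝ) 1, ∀ x' ∈ Set.Icc (0:ℝ) 1,
      |V (x, y) - V (x', y)| ≤ |x - x'|)
    (hLip2 : ∀ x ∈ Set.Icc (0:ℝ) 1, ∀ y ∈ Set.Icc (0:ℝ) 1, ∀ y' ∈ Set.Icc (0:ℝ) 1,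
      |V (x, y) - V (x, y')| ≤ |y - y'|)
    (hconc1 : ∀ y ∈ Set.Icc (0:ℝ) 1, ConcaveOn ℝ (Set.Icc (0:ℝ) 1) (fun x => V (x, y)))
    (hconc2 : ∀ x ∈ Set.Icc (0:ℝ) 1, ConcaveOn ℝ (Set.Icc (0:ℝ) 1) (fun y => V (x, y))) :
    ∃ b : ℝ → ℝ,
      (∀ x ∈ Set.Icc (0:ℝ) A₁, b x ∈ Set.Icc (0:ℝ) A₂) ∧
      AntitoneOn b (Set.Icc (0:ℝ) A₁) ∧
      UpperSemicontinuousOn b (Set.Icc (0:ℝ) A₁) ∧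
      (∀ p : ℝ × ℝ, p ∈ Set.Icc ((0:ℝ), (0:ℝ)) (1/2, 1/2) →
        (V p = g p ↔ p.1 ≤ A₁ ∧ p.2 ≤ b p.1)) :=
  stmt14_general A₁ A₂ hA₁ hA₂ V g hgdef u₁ u₂ hu₁ hu₂ hC₁ hC₂ hVle hVcont hLip1 hLip2
end

section
/- For the problem (QD2) with g(π) = 1-π₁π₂ and h(π) = cπ₁π₂: let u₂ be the value function of the one-dimensional detection problem QD(μ₂,λ₂,c) with continuation region [0,B₂*), and define H(π₁,π₂) = π₁u₂(π₂) + 1 - π₁. Then H = g on {π₂ ≥ B₂*}, and LH + cπ₁π₂ = -(1 - u₂(π₂))λ₁(1-π₁) ≤ 0 on [0,1]×[0,B₂*), where L is the generator L = Σ_i [½μ_i²π_i²(1-π_i)²∂²_{π_i} + λ_i(1-π_i)∂_{π_i}]. -/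
open Set

-- One coordinate summand of the generator `L` of the posterior process.
noncomputable def shiryaevGenerator (mu lam : ℝ) (f : ℝ → ℝ) (p : ℝ) : ℝ :=
  1 / 2 * mu ^ 2 * p ^ 2 * (1 - p) ^ 2 * deriv (deriv f) p + lam * (1 - p) * deriv f p

-- No differentiability is needed: `deriv` commutes with scalar multiples even where it is junk.
theorem shiryaevGenerator_const_mul_add (mu lam a b : ℝ) (f : ℝ → ℝ) (p : ℝ) :
    shiryaevGenerator mu lam (fun q => a * f q + b) p = a * shiryaevGenerator mu lam f p := by
  have hderiv : deriv (fun q => a * f q + b) = fun q => a * deriv f q := by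
    funext q
    rw [deriv_add_const, deriv_const_mul_field]
  simp only [shiryaevGenerator, hderiv, deriv_const_mul_field]
  ring

theorem shiryaevGenerator_affine (mu lam a b p : ℝ) :
    shiryaevGenerator mu lam (fun q => a * q + b) p = lam * (1 - p) * a := by
  refine (shiryaevGenerator_const_mul_add mu lam a b id p).trans ?_
  simp only [shiryaevGenerator, deriv_id', deriv_const']
  ring

theorem stmt18_general (c lam₁ lam₂ mu₁ mu₂ B₂ : ℝ)
    (hlam₁ : 0 < lam₁)
    (hB₂ : B₂ ∈ Set.Ioo (0:ℝ) 1)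
    (u₂ : ℝ → ℝ)
    (hle1 : ∀ y ∈ Set.Icc (0:ℝ) 1, u₂ y ≤ 1)
    (hstop : ∀ y ∈ Set.Icc B₂ 1, u₂ y = 1 - y)
    (hODE : ∀ y ∈ Set.Ico (0:ℝ) B₂,
      (1/2) * mu₂ ^ 2 * y ^ 2 * (1 - y) ^ 2 * deriv (deriv u₂) y
        + lam₂ * (1 - y) * deriv u₂ y + c * y = 0)
    (H : ℝ → ℝ → ℝ) (hH : ∀ x y, H x y = x * u₂ y + 1 - x) :
    (∀ x ∈ Set.Icc (0:ℝ) 1, ∀ y ∈ Set.Icc B₂ 1, H x y = 1 - x * y) ∧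
    (∀ x ∈ Set.Icc (0:ℝ) 1, ∀ y ∈ Set.Ico (0:ℝ) B₂,
      ((1/2) * mu₁ ^ 2 * x ^ 2 * (1 - x) ^ 2 * deriv (deriv (fun x' => H x' y)) x
        + lam₁ * (1 - x) * deriv (fun x' => H x' y) x
        + (1/2) * mu₂ ^ 2 * y ^ 2 * (1 - y) ^ 2 * deriv (deriv (H x)) y
        + lam₂ * (1 - y) * deriv (H x) y) + c * x * y
        = -(1 - u₂ y) * lam₁ * (1 - x) ∧
      -(1 - u₂ y) * lam₁ * (1 - x) ≤ 0) := by
  refine ⟨fun x _ y hy => by rw [hH, hstop y hy]; ring, fun x hx y hy => ⟨?_, ?_⟩⟩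
  · have hx_affine : (fun x' => H x' y) = fun x' => (u₂ y - 1) * x' + 1 :=
      funext fun x' => by rw [hH]; ring
    have hy_affine : H x = fun y' => x * u₂ y' + (1 - x) :=
      funext fun y' => by rw [hH]; ring
    have hgen₁ := shiryaevGenerator_affine mu₁ lam₁ (u₂ y - 1) 1 x
    have hgen₂ := shiryaevGenerator_const_mul_add mu₂ lam₂ x (1 - x) u₂ y
    rw [hx_affine, hy_affine]
    simp only [shiryaevGenerator] at hgen₁ hgen₂
    linear_combination hgen₁ + hgen₂ + x * hODE y hy
  · have hu : u₂ y ≤ 1 := hle1 y ⟨hy.1, hy.2.le.trans hB₂.2.le⟩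
    have hx1 : 0 ≤ 1 - x := sub_nonneg.2 hx.2
    linarith [mul_nonneg (mul_nonneg (sub_nonneg.2 hu) hlam₁.le) hx1]

/-- for (QD2), with u₂ the value function of QD(μ₂,λ₂,c) (concave,
non-increasing, ≤ 1, equal to 1-y on [B₂*,1], solving the free-boundary ODE on
[0,B₂*)), the function H(x,y) = x·u₂(y) + 1 - x satisfies H = g = 1 - xy on
{y ≥ B₂*}, and LH + cxy = -(1-u₂(y))λ₁(1-x) ≤ 0 on [0,1]×[0,B₂*), where L is the
generator Σᵢ [½μᵢ²πᵢ²(1-πᵢ)²∂²ᵢ + λᵢ(1-πᵢ)∂ᵢ]. -/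
theorem stmt18 (c lam₁ lam₂ mu₁ mu₂ B₂ : ℝ)
    (hc : 0 < c) (hlam₁ : 0 < lam₁) (hlam₂ : 0 < lam₂)
    (hB₂ : B₂ ∈ Set.Ioo (0:ℝ) 1)
    (u₂ : ℝ → ℝ)
    (hconc : ConcaveOn ℝ (Set.Icc (0:ℝ) 1) u₂)
    (hanti : AntitoneOn u₂ (Set.Icc (0:ℝ) 1))
    (hle1 : ∀ y ∈ Set.Icc (0:ℝ) 1, u₂ y ≤ 1)
    (hstop : ∀ y ∈ Set.Icc B₂ 1, u₂ y = 1 - y)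
    (hdiff : ∀ y ∈ Set.Ico (0:ℝ) B₂,
      DifferentiableAt ℝ u₂ y ∧ DifferentiableAt ℝ (deriv u₂) y)
    (hODE : ∀ y ∈ Set.Ico (0:ℝ) B₂,
      (1/2) * mu₂ ^ 2 * y ^ 2 * (1 - y) ^ 2 * deriv (deriv u₂) y
        + lam₂ * (1 - y) * deriv u₂ y + c * y = 0)
    (H : ℝ → ℝ → ℝ) (hH : ∀ x y, H x y = x * u₂ y + 1 - x) :
    (∀ x ∈ Set.Icc (0:ℝ) 1, ∀ y ∈ Set.Icc B₂ 1, H x y = 1 - x * y) ∧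
    (∀ x ∈ Set.Icc (0:ℝ) 1, ∀ y ∈ Set.Ico (0:ℝ) B₂,
      ((1/2) * mu₁ ^ 2 * x ^ 2 * (1 - x) ^ 2 * deriv (deriv (fun x' => H x' y)) x
        + lam₁ * (1 - x) * deriv (fun x' => H x' y) x
        + (1/2) * mu₂ ^ 2 * y ^ 2 * (1 - y) ^ 2 * deriv (deriv (H x)) y
        + lam₂ * (1 - y) * deriv (H x) y) + c * x * y
        = -(1 - u₂ y) * lam₁ * (1 - x) ∧
      -(1 - u₂ y) * lam₁ * (1 - x) ≤ 0) :=
  stmt18_general c lam₁ lam₂ mu₁ mu₂ B₂ hlam₁ hB₂ u₂ hle1 hstop hODE H hH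
end
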